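/- arXiv:1911.01759 — 7 statements merged into one kernel-verified Lean document; each statement's English description precedes it below -/
import Mathlib

section
/- Let s and s' be states of a deterministic parity automaton with L(s) = L(s') (the languages accepted starting from s and from s' are equal) and such that s' is not reachable from s. Then redirecting all incoming edges of s' to s (and removing s') yields a deterministic parity automaton recognizing the same language as the original (from the original initial state). -/
structure NBA (Q A : Type) where
  Δ : Q → A → Set Q
  Q0 : Set Q
  F : Set Q

namespace NBA

variable {Q A : Type}

def ΔSet (M : NBA Q A) (P : Set Q) (a : A) : Set Q := ⋃ p ∈ P, M.Δ p a

def psWord (M : NBA Q A) : Set Q → List A → Set Q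
  | P, [] => P
  | P, a :: u => psWord M (M.ΔSet P a) u

def step (M : NBA Q A) (p q : Q) : Prop := ∃ a, q ∈ M.Δ p a

def reach (M : NBA Q A) : Q → Q → Prop := Relation.TransGen M.step

def scc (M : NBA Q A) (p : Q) : Set Q := {q | p = q ∨ (M.reach p q ∧ M.reach q p)}

def IsSCC (M : NBA Q A) (C : Set Q) : Prop := ∃ p, C = M.scc p

def TrivialSCC (M : NBA Q A) (C : Set Q) : Prop := ∃ q, C = {q} ∧ ¬ M.reach q q

def RejectingSCC (M : NBA Q A) (C : Set Q) : Prop := M.TrivialSCC C ∨ C ∩ M.F = ∅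

def AcceptingSCC (M : NBA Q A) (C : Set Q) : Prop :=
  M.IsSCC C ∧ ¬ M.TrivialSCC C ∧
    ∀ (n : ℕ) (f : ℕ → Q), 0 < n → f n = f 0 → (∀ i ≤ n, f i ∈ C) →
      (∀ i < n, M.step (f i) (f (i + 1))) → ∃ i < n, f i ∈ M.F

def accUnion (M : NBA Q A) : Set Q := {q | ∃ C, M.AcceptingSCC C ∧ q ∈ C}

def DetSCC (M : NBA Q A) (C : Set Q) : Prop :=
  M.IsSCC C ∧ ∀ p ∈ C, ∀ a, Set.Subsingleton (M.Δ p a ∩ C)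

def IsRunFrom (M : NBA Q A) (ρ : ℕ → Q) (w : ℕ → A) : Prop :=
  ∀ i, ρ (i + 1) ∈ M.Δ (ρ i) (w i)

def IsRun (M : NBA Q A) (ρ : ℕ → Q) (w : ℕ → A) : Prop :=
  ρ 0 ∈ M.Q0 ∧ M.IsRunFrom ρ w

def Accepting (M : NBA Q A) (ρ : ℕ → Q) : Prop := ∀ N, ∃ n ≥ N, ρ n ∈ M.F

def LangFrom (M : NBA Q A) (P : Set Q) : Set (ℕ → A) :=
  {w | ∃ ρ, ρ 0 ∈ P ∧ M.IsRunFrom ρ w ∧ M.Accepting ρ}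

def Lang (M : NBA Q A) : Set (ℕ → A) := M.LangFrom M.Q0

def prof (M : NBA Q A) (ρ : ℕ → Q) : ℕ → Prop := fun i => ρ i ∈ M.F

def psStep (M : NBA Q A) (P P' : Set Q) : Prop := ∃ a, P' = M.ΔSet P a

def psReach (M : NBA Q A) : Set Q → Set Q → Prop := Relation.TransGen M.psStep

def psScc (M : NBA Q A) (P : Set Q) : Set (Set Q) :=
  {P' | P = P' ∨ (M.psReach P P' ∧ M.psReach P' P)}

def Weak (M : NBA Q A) : Prop :=
  ∀ C, M.IsSCC C → M.AcceptingSCC C ∨ M.RejectingSCC C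

end NBA

def profLt (z z' : ℕ → Prop) : Prop :=
  ∃ i, (∀ j < i, (z j ↔ z' j)) ∧ ¬ z i ∧ z' i

def profLe (z z' : ℕ → Prop) : Prop :=
  profLt z z' ∨ ∀ i, (z i ↔ z' i)

structure DPA (Q A : Type) where
  δ : Q → A → Q
  init : Q
  c : Q → A → ℕ

namespace DPA

variable {Q A : Type}

def run (M : DPA Q A) (s : Q) (w : ℕ → A) : ℕ → Q
  | 0 => s
  | n + 1 => M.δ (run M s w n) (w n)

def InfOftPrio (M : DPA Q A) (s : Q) (w : ℕ → A) (k : ℕ) : Prop :=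
  ∀ N, ∃ n ≥ N, M.c (M.run s w n) (w n) = k

def AcceptFrom (M : DPA Q A) (s : Q) (w : ℕ → A) : Prop :=
  ∃ k, M.InfOftPrio s w k ∧ (∀ j, M.InfOftPrio s w j → k ≤ j) ∧ Even k

def LangFrom (M : DPA Q A) (s : Q) : Set (ℕ → A) := {w | M.AcceptFrom s w}

def Lang (M : DPA Q A) : Set (ℕ → A) := M.LangFrom M.init

def runWord (M : DPA Q A) : Q → List A → Q
  | s, [] => s
  | s, a :: u => runWord M (M.δ s a) u

def Reach (M : DPA Q A) (s t : Q) : Prop := ∃ u : List A, M.runWord s u = t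

def mealyOut (M : DPA Q A) : Q → List A → List ℕ
  | _, [] => []
  | s, a :: u => M.c s a :: mealyOut M (M.δ s a) u

def MealyEquiv (M : DPA Q A) (p q : Q) : Prop := ∀ u, M.mealyOut p u = M.mealyOut q u

def dstep (M : DPA Q A) (s t : Q) : Prop := ∃ a, M.δ s a = t

def dreach (M : DPA Q A) : Q → Q → Prop := Relation.TransGen M.dstep

def dscc (M : DPA Q A) (s : Q) : Set Q := {t | s = t ∨ (M.dreach s t ∧ M.dreach t s)}

end DPA

def parentRel (n : ℕ) (α : Fin n ≃ Fin n) (i k : Fin n) : Prop :=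
  IsLeast {k' : Fin n | i < k' ∧ α k' < α i} k

def descend (n : ℕ) (α : Fin n ≃ Fin n) (j i : Fin n) : Prop :=
  Relation.ReflTransGen (parentRel n α) j i

def subU {Q : Type} (n : ℕ) (S : Fin n → Set Q) (α : Fin n ≃ Fin n) (i : Fin n) : Set Q :=
  ⋃ j ∈ {j | descend n α j i}, S j

def sliceEnc {Q : Type} (n : ℕ) (S : Fin n → Set Q) (α : Fin n ≃ Fin n) : Fin n → Set Q :=
  fun r => subU n S α (α.symm r)
namespace DPA

variable {Q A : Type}

/-- The redirected automaton. -/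
def redir [DecidableEq Q] (M : DPA Q A) (s s' : Q) : DPA Q A :=
  ⟨fun p a => if M.δ p a = s' then s else M.δ p a, if M.init = s' then s else M.init, M.c⟩

lemma redir_δ [DecidableEq Q] (M : DPA Q A) (s s' : Q) (p : Q) (a : A) :
    (M.redir s s').δ p a = if M.δ p a = s' then s else M.δ p a := rfl

lemma runWord_append (M : DPA Q A) (u v : List A) (t : Q) :
    M.runWord t (u ++ v) = M.runWord (M.runWord t u) v := by
  induction u generalizing t with
  | nil => rfl
  | cons a u ih => simp [runWord, ih]

lemma reach_succ (M : DPA Q A) {s t : Q} (h : M.Reach s t) (a : A) :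
    M.Reach s (M.δ t a) := by
  obtain ⟨u, hu⟩ := h
  exact ⟨u ++ [a], by simp [runWord_append, hu, runWord]⟩

lemma run_shift (M : DPA Q A) (t : Q) (w : ℕ → A) (n : ℕ) :
    ∀ i, M.run t w (n + i) = M.run (M.run t w n) (fun j => w (n + j)) i := by
  intro i
  induction i with
  | zero => rfl
  | succ i ih =>
      show M.run t w ((n + i) + 1) = _
      simp [run, ih]

lemma infOft_shift (M : DPA Q A) (t : Q) (w : ℕ → A) (n k : ℕ) :
    M.InfOftPrio t w k ↔ M.InfOftPrio (M.run t w n) (fun j => w (n + j)) k := by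
  constructor
  · intro h N
    obtain ⟨m, hm, hc⟩ := h (N + n)
    refine ⟨m - n, by omega, ?_⟩
    have e : n + (m - n) = m := by omega
    rw [← run_shift]
    simpa [e] using hc
  · intro h N
    obtain ⟨m, hm, hc⟩ := h N
    refine ⟨n + m, by omega, ?_⟩
    rw [run_shift]
    exact hc

lemma acceptFrom_shift (M : DPA Q A) (t : Q) (w : ℕ → A) (n : ℕ) :
    M.AcceptFrom t w ↔ M.AcceptFrom (M.run t w n) (fun j => w (n + j)) := by
  unfold AcceptFrom
  constructor
  · rintro ⟨k, h1, h2, h3⟩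
    exact ⟨k, (M.infOft_shift t w n k).1 h1,
      fun j hj => h2 j ((M.infOft_shift t w n j).2 hj), h3⟩
  · rintro ⟨k, h1, h2, h3⟩
    exact ⟨k, (M.infOft_shift t w n k).2 h1,
      fun j hj => h2 j ((M.infOft_shift t w n j).1 hj), h3⟩

lemma accept_congr {M₁ M₂ : DPA Q A} (hc : M₁.c = M₂.c) {t₁ t₂ : Q} {w : ℕ → A}
    (h : ∀ n, M₁.run t₁ w n = M₂.run t₂ w n) :
    (M₁.AcceptFrom t₁ w ↔ M₂.AcceptFrom t₂ w) := by
  have hio : ∀ k, M₁.InfOftPrio t₁ w k ↔ M₂.InfOftPrio t₂ w k := by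
    intro k; unfold InfOftPrio; simp [h, hc]
  unfold AcceptFrom
  constructor
  · rintro ⟨k, h1, h2, h3⟩
    exact ⟨k, (hio k).1 h1, fun j hj => h2 j ((hio j).2 hj), h3⟩
  · rintro ⟨k, h1, h2, h3⟩
    exact ⟨k, (hio k).2 h1, fun j hj => h2 j ((hio j).1 hj), h3⟩

lemma redir_run_from_s [DecidableEq Q] (M : DPA Q A) (s s' : Q) (hnr : ¬ M.Reach s s')
    (w : ℕ → A) : ∀ n, (M.redir s s').run s w n = M.run s w n := by
  have key : ∀ n, (M.redir s s').run s w n = M.run s w n ∧ M.Reach s (M.run s w n) := by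
    intro n
    induction n with
    | zero => exact ⟨rfl, ⟨[], rfl⟩⟩
    | succ n ih =>
        obtain ⟨h1, h2⟩ := ih
        have hne : M.δ (M.run s w n) (w n) ≠ s' := by
          intro he
          exact hnr (he ▸ M.reach_succ h2 (w n))
        constructor
        · show (M.redir s s').δ ((M.redir s s').run s w n) (w n) = _
          rw [h1, redir_δ, if_neg hne]
          rfl
        · exact M.reach_succ h2 (w n)
  exact fun n => (key n).1

lemma redir_accept_from_s [DecidableEq Q] (M : DPA Q A) (s s' : Q) (hnr : ¬ M.Reach s s')
    (w : ℕ → A) : (M.redir s s').AcceptFrom s w ↔ M.AcceptFrom s w :=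
  accept_congr (M₁ := M.redir s s') (M₂ := M) rfl (M.redir_run_from_s s s' hnr w)

end DPA

/-- redirecting incoming edges of a language-equivalent,
non-reachable state preserves the language of a DPA. -/
theorem stmt0 {Q A : Type} [DecidableEq Q] (M : DPA Q A) (s s' : Q)
    (hlang : M.LangFrom s = M.LangFrom s') (hnr : ¬ M.Reach s s') :
    (DPA.mk (fun p a => if M.δ p a = s' then s else M.δ p a)
        (if M.init = s' then s else M.init) M.c).Lang = M.Lang := by
  show (M.redir s s').Lang = M.Lang
  have hss' : ∀ v, M.AcceptFrom s v ↔ M.AcceptFrom s' v := by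
    intro v
    exact Set.ext_iff.1 hlang v
  ext w
  simp only [DPA.Lang, DPA.LangFrom, Set.mem_setOf_eq]
  by_cases hinit : M.init = s'
  · have h1 : (M.redir s s').init = s := by simp [DPA.redir, hinit]
    rw [h1, hinit]
    rw [M.redir_accept_from_s s s' hnr w]
    exact hss' w
  · have h1 : (M.redir s s').init = M.init := by simp [DPA.redir, hinit]
    rw [h1]
    -- agreement of runs up to first redirect
    have agree : ∀ i, (∀ j < i, M.δ ((M.redir s s').run M.init w j) (w j) ≠ s') →
        (M.redir s s').run M.init w i = M.run M.init w i := by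
      intro i
      induction i with
      | zero => intro _; rfl
      | succ i ih =>
          intro h
          have hi := ih (fun j hj => h j (Nat.lt_succ_of_lt hj))
          show (M.redir s s').δ ((M.redir s s').run M.init w i) (w i) = _
          have := h i (Nat.lt_succ_self i)
          rw [DPA.redir_δ, if_neg this, hi]
          rfl
    by_cases hex : ∃ n, M.δ ((M.redir s s').run M.init w n) (w n) = s'
    · classical
      set n := Nat.find hex with hn
      have hmin : ∀ j < n, M.δ ((M.redir s s').run M.init w j) (w j) ≠ s' :=
        fun j hj => Nat.find_min hex hj
      have hagree : ∀ i ≤ n, (M.redir s s').run M.init w i = M.run M.init w i :=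
        fun i hi => agree i (fun j hj => hmin j (lt_of_lt_of_le hj hi))
      have hPn : M.δ ((M.redir s s').run M.init w n) (w n) = s' := Nat.find_spec hex
      have hrun' : (M.redir s s').run M.init w (n + 1) = s := by
        show (M.redir s s').δ ((M.redir s s').run M.init w n) (w n) = s
        rw [DPA.redir_δ, if_pos hPn]
      have hrun : M.run M.init w (n + 1) = s' := by
        show M.δ (M.run M.init w n) (w n) = s'
        rw [← hagree n le_rfl]; exact hPn
      rw [(M.redir s s').acceptFrom_shift M.init w (n + 1),
          M.acceptFrom_shift M.init w (n + 1), hrun', hrun]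
      rw [M.redir_accept_from_s s s' hnr]
      exact hss' _
    · push_neg at hex
      have : ∀ i, (M.redir s s').run M.init w i = M.run M.init w i :=
        fun i => agree i (fun j _ => hex j)
      exact DPA.accept_congr (M₁ := M.redir s s') (M₂ := M) rfl this
end

section
/- Let B be a deterministic parity automaton equivalent to a nondeterministic Büchi automaton A (i.e., L(B) = L(A)). If a finite word u leads in B from the initial state to state s, and in the powerset structure of A leads from the initial set Q0 to the set P ⊆ Q, then the language accepted by B from s equals the language accepted by A from the set of initial states P. -/
namespace Stmt1Aux

def prepend {A : Type} : List A → (ℕ → A) → (ℕ → A)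
  | [], w => w
  | a :: u, w => fun n => match n with
    | 0 => a
    | m + 1 => prepend u w m

@[simp] lemma prepend_nil {A : Type} (w : ℕ → A) : prepend [] w = w := rfl

@[simp] lemma prepend_cons_zero {A : Type} (a : A) (u : List A) (w : ℕ → A) :
    prepend (a :: u) w 0 = a := rfl

@[simp] lemma prepend_cons_succ {A : Type} (a : A) (u : List A) (w : ℕ → A) (n : ℕ) :
    prepend (a :: u) w (n + 1) = prepend u w n := rfl

lemma prepend_eval {A : Type} : ∀ (u : List A) (w : ℕ → A) (n : ℕ),
    prepend u w (u.length + n) = w n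
  | [], w, n => by simp [prepend]
  | a :: u, w, n => by
    have : (a :: u).length + n = (u.length + n) + 1 := by rw [List.length_cons]; omega
    rw [this, prepend_cons_succ, prepend_eval u w n]

variable {Q A S : Type}

lemma dpa_run_cons (B : DPA S A) (s : S) (a : A) (u : List A) (w : ℕ → A) :
    ∀ n, B.run s (prepend (a :: u) w) (n + 1) = B.run (B.δ s a) (prepend u w) n := by
  intro n
  induction n with
  | zero => rfl
  | succ m ih =>
    show B.δ (B.run s (prepend (a :: u) w) (m + 1)) (prepend (a :: u) w (m + 1)) = _
    rw [ih, prepend_cons_succ]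
    rfl

lemma dpa_run_prepend (B : DPA S A) : ∀ (u : List A) (s : S) (w : ℕ → A) (n : ℕ),
    B.run s (prepend u w) (u.length + n) = B.run (B.runWord s u) w n
  | [], s, w, n => by simp [prepend, DPA.runWord]
  | a :: u, s, w, n => by
    have h : (a :: u).length + n = (u.length + n) + 1 := by rw [List.length_cons]; omega
    rw [h, dpa_run_cons, dpa_run_prepend B u (B.δ s a) w n]
    rfl

lemma infoft_prepend (B : DPA S A) (u : List A) (s : S) (w : ℕ → A) (k : ℕ) :
    B.InfOftPrio (B.runWord s u) w k ↔ B.InfOftPrio s (prepend u w) k := by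
  constructor
  · intro h N
    obtain ⟨n, hn, hc⟩ := h N
    refine ⟨u.length + n, le_trans hn (Nat.le_add_left n u.length), ?_⟩
    rw [dpa_run_prepend, prepend_eval]; exact hc
  · intro h N
    obtain ⟨n, hn, hc⟩ := h (u.length + N)
    obtain ⟨m, rfl⟩ := Nat.exists_eq_add_of_le hn
    refine ⟨N + m, Nat.le_add_right N m, ?_⟩
    have e : u.length + N + m = u.length + (N + m) := by ring
    rw [e] at hc
    rw [dpa_run_prepend, prepend_eval] at hc
    exact hc

lemma dpa_accept_prepend (B : DPA S A) (u : List A) (s : S) (w : ℕ → A) :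
    B.AcceptFrom (B.runWord s u) w ↔ B.AcceptFrom s (prepend u w) := by
  unfold DPA.AcceptFrom
  simp only [infoft_prepend]

lemma nba_lang_cons (M : NBA Q A) (a : A) (P : Set Q) (v : ℕ → A) :
    (fun n => match n with | 0 => a | m + 1 => v m) ∈ M.LangFrom P ↔
      v ∈ M.LangFrom (M.ΔSet P a) := by
  constructor
  · rintro ⟨ρ, h0, hrun, hacc⟩
    refine ⟨fun n => ρ (n + 1), ?_, ?_, ?_⟩
    · exact Set.mem_biUnion h0 (hrun 0)
    · intro i; exact hrun (i + 1)
    · intro N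
      obtain ⟨n, hn, hF⟩ := hacc (N + 1)
      obtain ⟨m, rfl⟩ := Nat.exists_eq_add_of_le hn
      exact ⟨N + m, Nat.le_add_right N m, by
        have : N + 1 + m = N + m + 1 := by ring
        rwa [this] at hF⟩
  · rintro ⟨ρ, h0, hrun, hacc⟩
    obtain ⟨p, hp, hq⟩ := Set.mem_iUnion₂.mp h0
    refine ⟨fun n => match n with | 0 => p | m + 1 => ρ m, hp, ?_, ?_⟩
    · intro i
      cases i with
      | zero => exact hq
      | succ m => exact hrun m
    · intro N
      obtain ⟨n, hn, hF⟩ := hacc N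
      exact ⟨n + 1, le_trans hn (Nat.le_succ n), hF⟩

lemma nba_lang_prepend (M : NBA Q A) : ∀ (u : List A) (P : Set Q) (w : ℕ → A),
    prepend u w ∈ M.LangFrom P ↔ w ∈ M.LangFrom (M.psWord P u)
  | [], P, w => Iff.rfl
  | a :: u, P, w => by
    have h1 : prepend (a :: u) w =
        (fun n => match n with | 0 => a | m + 1 => prepend u w m) := rfl
    rw [h1, nba_lang_cons M a P (prepend u w), nba_lang_prepend M u (M.ΔSet P a) w]
    rfl

end Stmt1Aux

/-- state of an equivalent DPA reached by u accepts the same language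
as the NBA from the powerset reached by u. -/
theorem stmt1 {Q A S : Type} (M : NBA Q A) (B : DPA S A) (hB : B.Lang = M.Lang)
    (u : List A) (s : S) (P : Set Q)
    (hs : B.runWord B.init u = s) (hP : M.psWord M.Q0 u = P) :
    B.LangFrom s = M.LangFrom P := by
  subst hs hP
  ext w
  have h1 : w ∈ B.LangFrom (B.runWord B.init u) ↔
      Stmt1Aux.prepend u w ∈ B.Lang :=
    Stmt1Aux.dpa_accept_prepend B u B.init w
  have h2 : Stmt1Aux.prepend u w ∈ M.Lang ↔
      w ∈ M.LangFrom (M.psWord M.Q0 u) :=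
    Stmt1Aux.nba_lang_prepend M u M.Q0 w
  rw [h1, hB, h2]
end

section
/- If two states s, s' of a deterministic parity automaton B equivalent to an NBA A are reached from the initial state of B by finite words u and u' respectively, and u and u' lead to the same set P in the powerset structure of A, then L(s) = L(s'). -/
/-- Prepend a letter to an infinite word. -/
def consW {A : Type} (a : A) (w : ℕ → A) : ℕ → A
  | 0 => a
  | n + 1 => w n

/-- Prepend a finite word to an infinite word. -/
def appW {A : Type} : List A → (ℕ → A) → (ℕ → A)
  | [], w => w
  | a :: u, w => consW a (appW u w)

namespace DPA

variable {Q A : Type}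

lemma run_consW (M : DPA Q A) (s : Q) (a : A) (w : ℕ → A) :
    ∀ n, M.run s (consW a w) (n + 1) = M.run (M.δ s a) w n := by
  intro n
  induction n with
  | zero => rfl
  | succ n ih => show M.δ _ _ = M.δ _ _; rw [ih]; rfl

lemma infOft_consW (M : DPA Q A) (s : Q) (a : A) (w : ℕ → A) (k : ℕ) :
    M.InfOftPrio s (consW a w) k ↔ M.InfOftPrio (M.δ s a) w k := by
  constructor
  · intro h N
    obtain ⟨n, hn, hk⟩ := h (N + 1)
    obtain ⟨m, rfl⟩ : ∃ m, n = m + 1 := ⟨n - 1, by omega⟩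
    refine ⟨m, by omega, ?_⟩
    rw [← hk, M.run_consW]; rfl
  · intro h N
    obtain ⟨n, hn, hk⟩ := h N
    exact ⟨n + 1, by omega, by rw [M.run_consW]; exact hk⟩

lemma acceptFrom_consW (M : DPA Q A) (s : Q) (a : A) (w : ℕ → A) :
    M.AcceptFrom s (consW a w) ↔ M.AcceptFrom (M.δ s a) w := by
  unfold AcceptFrom
  constructor <;> rintro ⟨k, h1, h2, h3⟩ <;>
    exact ⟨k, by rwa [M.infOft_consW] at *, fun j hj => h2 j (by rwa [M.infOft_consW] at *), h3⟩

lemma acceptFrom_appW (M : DPA Q A) (u : List A) (s : Q) (w : ℕ → A) :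
    M.AcceptFrom s (appW u w) ↔ M.AcceptFrom (M.runWord s u) w := by
  induction u generalizing s with
  | nil => rfl
  | cons a u ih => exact (M.acceptFrom_consW s a (appW u w)).trans (ih (M.δ s a))

end DPA

namespace NBA

variable {Q A : Type}

lemma langFrom_appW (M : NBA Q A) (u : List A) (P : Set Q) (w : ℕ → A) :
    appW u w ∈ M.LangFrom P ↔ w ∈ M.LangFrom (M.psWord P u) := by
  induction u generalizing P with
  | nil => rfl
  | cons a u ih =>
    show consW a (appW u w) ∈ M.LangFrom P ↔ _
    rw [show M.psWord P (a :: u) = M.psWord (M.ΔSet P a) u from rfl, ← ih]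
    constructor
    · rintro ⟨ρ, h0, hr, ha⟩
      refine ⟨fun n => ρ (n + 1), ?_, fun i => hr (i + 1), fun N => ?_⟩
      · exact Set.mem_biUnion h0 (hr 0)
      · obtain ⟨n, hn, hf⟩ := ha (N + 1)
        obtain ⟨m, rfl⟩ : ∃ m, n = m + 1 := ⟨n - 1, by omega⟩
        exact ⟨m, by omega, hf⟩
    · rintro ⟨ρ, h0, hr, ha⟩
      obtain ⟨p, hp, hpa⟩ := Set.mem_iUnion₂.mp h0
      refine ⟨fun n => match n with | 0 => p | n + 1 => ρ n, hp, ?_, fun N => ?_⟩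
      · intro i
        match i with
        | 0 => exact hpa
        | i + 1 => exact hr i
      · obtain ⟨n, hn, hf⟩ := ha N
        exact ⟨n + 1, by omega, hf⟩

end NBA

/-- DPA states reached by words leading to the same powerset are
language-equivalent. -/
theorem stmt2 {Q A S : Type} (M : NBA Q A) (B : DPA S A) (hB : B.Lang = M.Lang)
    (u u' : List A) (s s' : S) (P : Set Q)
    (hs : B.runWord B.init u = s) (hs' : B.runWord B.init u' = s')
    (hP : M.psWord M.Q0 u = P) (hP' : M.psWord M.Q0 u' = P) :
    B.LangFrom s = B.LangFrom s' := by
  ext w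
  have key : ∀ (v : List A) (t : S), B.runWord B.init v = t →
      M.psWord M.Q0 v = P → (w ∈ B.LangFrom t ↔ w ∈ M.LangFrom P) := by
    rintro v t rfl rfl
    calc w ∈ B.LangFrom (B.runWord B.init v)
        ↔ B.AcceptFrom (B.runWord B.init v) w := Iff.rfl
      _ ↔ B.AcceptFrom B.init (appW v w) := (B.acceptFrom_appW v B.init w).symm
      _ ↔ appW v w ∈ M.Lang := by rw [← hB]; rfl
      _ ↔ w ∈ M.LangFrom (M.psWord M.Q0 v) := M.langFrom_appW v M.Q0 w
  rw [key u s hs hP, key u' s' hs' hP']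
end

section
/- Let C be a deterministic SCC of an NBA, w an infinite word, P_0 ⊆ C, and P_{i+1} = Δ(P_i, w(i)) ∩ C. If P_i ≠ ∅ for all i and P_i ∩ F ≠ ∅ for infinitely many i, then there exists an infinite run ρ with ρ(0) ∈ P_0, ρ(i) ∈ P_i for all i, and ρ(i) ∈ F for infinitely many i. -/
private def iterUp {Q : Type} (succ : ℕ → Q → Q) (N0 : ℕ) (q : Q) : ℕ → Q
  | 0 => q
  | m + 1 => succ (N0 + m) (iterUp succ N0 q m)

private def iterDown {Q : Type} (pred : ℕ → Q → Q) : ℕ → ℕ → Q → Q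
  | _, 0, f => f
  | b, m + 1, f => iterDown pred b m (pred (b + m) f)

private lemma iterDown_peel {Q : Type} (pred : ℕ → Q → Q) (b m : ℕ) (f : Q) :
    iterDown pred b (m + 1) f = pred b (iterDown pred (b + 1) m f) := by
  induction m generalizing b f with
  | zero => rfl
  | succ m ih =>
    show iterDown pred b (m + 1) (pred (b + (m + 1)) f) = _
    rw [ih]
    congr 1
    show _ = iterDown pred (b + 1) m (pred ((b + 1) + m) f)
    congr 2
    omega

/-- inside a deterministic SCC, a never-empty set sequence hitting F
infinitely often contains a single run visiting F infinitely often. -/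
theorem stmt7 {Q A : Type} [Finite Q] (M : NBA Q A) (C : Set Q)
    (hC : M.IsSCC C) (hdet : ∀ p ∈ C, ∀ a, Set.Subsingleton (M.Δ p a ∩ C))
    (w : ℕ → A) (P : ℕ → Set Q) (hP0 : P 0 ⊆ C)
    (hrec : ∀ i, P (i + 1) = M.ΔSet (P i) (w i) ∩ C)
    (hne : ∀ i, (P i).Nonempty)
    (hF : ∀ N, ∃ i ≥ N, (P i ∩ M.F).Nonempty) :
    ∃ ρ : ℕ → Q, ρ 0 ∈ P 0 ∧ (∀ i, ρ i ∈ P i) ∧ M.IsRunFrom ρ w ∧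
      ∀ N, ∃ i ≥ N, ρ i ∈ M.F := by
  classical
  have hPC : ∀ i, P i ⊆ C := by
    intro i
    cases i with
    | zero => exact hP0
    | succ i => rw [hrec]; exact Set.inter_subset_right
  -- predecessor function
  have hpredEx : ∀ i, ∀ q ∈ P (i + 1), ∃ p, p ∈ P i ∧ q ∈ M.Δ p (w i) := by
    intro i q hq
    rw [hrec] at hq
    simpa [NBA.ΔSet] using hq.1
  choose! pred hpredP hpredΔ using hpredEx
  -- injectivity of pred on P (i+1)
  have hinj : ∀ i, Set.InjOn (pred i) (P (i + 1)) := by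
    intro i q1 h1 q2 h2 heq
    have hp : pred i q1 ∈ C := hPC i (hpredP i q1 h1)
    have h1' : q1 ∈ M.Δ (pred i q1) (w i) ∩ C := ⟨hpredΔ i q1 h1, hPC _ h1⟩
    have h2' : q2 ∈ M.Δ (pred i q1) (w i) ∩ C := ⟨heq ▸ hpredΔ i q2 h2, hPC _ h2⟩
    exact hdet _ hp (w i) h1' h2'
  have hcard : ∀ i, (P (i + 1)).ncard ≤ (P i).ncard := by
    intro i
    calc (P (i + 1)).ncard = (pred i '' P (i + 1)).ncard :=
          (Set.ncard_image_of_injOn (hinj i)).symm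
      _ ≤ (P i).ncard := Set.ncard_le_ncard
          (by rintro _ ⟨q, hq, rfl⟩; exact hpredP i q hq) (Set.toFinite _)
  have hanti : Antitone fun i => (P i).ncard := antitone_nat_of_succ_le hcard
  obtain ⟨N0, hN0⟩ : ∃ N0, ∀ i, N0 ≤ i → (P i).ncard = (P N0).ncard := by
    obtain ⟨N0, hN0⟩ := Nat.sInf_mem (s := Set.range fun i => (P i).ncard) ⟨_, ⟨0, rfl⟩⟩
    refine ⟨N0, fun i hi => le_antisymm (hanti hi) ?_⟩
    exact le_trans (le_of_eq hN0) (Nat.sInf_le ⟨i, rfl⟩)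
  have himg : ∀ i, N0 ≤ i → pred i '' P (i + 1) = P i := by
    intro i hi
    apply Set.eq_of_subset_of_ncard_le
    · rintro _ ⟨q, hq, rfl⟩; exact hpredP i q hq
    · rw [Set.ncard_image_of_injOn (hinj i), hN0 _ hi, hN0 _ (le_trans hi (Nat.le_succ i))]
    · exact Set.toFinite _
  have hsuccEx : ∀ i, N0 ≤ i → ∀ p ∈ P i, ∃ q, q ∈ P (i + 1) ∧ pred i q = p := by
    intro i hi p hp
    rw [← himg i hi] at hp
    obtain ⟨q, hq, hq2⟩ := hp
    exact ⟨q, hq, hq2⟩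
  choose! succ hsuccP hsuccpred using hsuccEx
  have hsuccΔ : ∀ i, N0 ≤ i → ∀ p ∈ P i, succ i p ∈ M.Δ p (w i) := by
    intro i hi p hp
    have := hpredΔ i _ (hsuccP i hi p hp)
    rwa [hsuccpred i hi p hp] at this
  have hsucc_pred : ∀ i, N0 ≤ i → ∀ f ∈ P (i + 1), succ i (pred i f) = f := by
    intro i hi f hf
    have hp := hpredP i f hf
    apply hinj i (hsuccP i hi _ hp) hf
    rw [hsuccpred i hi _ hp]
  -- downward iteration lands in P b
  have hdownP : ∀ m b, ∀ f ∈ P (b + m), iterDown pred b m f ∈ P b := by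
    intro m
    induction m with
    | zero => intro b f hf; exact hf
    | succ m ih =>
      intro b f hf
      exact ih b _ (hpredP (b + m) f hf)
  -- upward iteration lands in P (N0 + m)
  have hupP : ∀ q ∈ P N0, ∀ m, iterUp succ N0 q m ∈ P (N0 + m) := by
    intro q hq m
    induction m with
    | zero => exact hq
    | succ m ih => exact hsuccP (N0 + m) (Nat.le_add_right _ _) _ ih
  -- up ∘ down = id on P (N0 + m)
  have hupdown : ∀ m, ∀ f ∈ P (N0 + m), iterUp succ N0 (iterDown pred N0 m f) m = f := by
    intro m
    induction m with
    | zero => intro f _; rfl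
    | succ m ih =>
      intro f hf
      have hg : pred (N0 + m) f ∈ P (N0 + m) := hpredP (N0 + m) f hf
      show succ (N0 + m) (iterUp succ N0 (iterDown pred N0 m (pred (N0 + m) f)) m) = f
      rw [ih _ hg]
      exact hsucc_pred (N0 + m) (Nat.le_add_right _ _) f hf
  -- pigeonhole: a state in P N0 whose orbit hits F infinitely often
  have hFF : ∀ N : ℕ, ∃ i, max N N0 ≤ i ∧ ∃ f, f ∈ P i ∧ f ∈ M.F := by
    intro N
    obtain ⟨i, hi, f, hf⟩ := hF (max N N0)
    exact ⟨i, hi, f, hf.1, hf.2⟩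
  choose idx hidx ff hffP hffF using hFF
  have hidxN0 : ∀ N, N0 ≤ idx N := fun N => le_trans (le_max_right _ _) (hidx N)
  have hidxN : ∀ N, N ≤ idx N := fun N => le_trans (le_max_left _ _) (hidx N)
  set qf : ℕ → Q := fun N => iterDown pred N0 (idx N - N0) (ff N) with hqf
  have hqfP : ∀ N, qf N ∈ P N0 := by
    intro N
    apply hdownP
    rw [Nat.add_sub_cancel' (hidxN0 N)]
    exact hffP N
  have hqfOrbit : ∀ N, iterUp succ N0 (qf N) (idx N - N0) = ff N := by
    intro N
    apply hupdown
    rw [Nat.add_sub_cancel' (hidxN0 N)]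
    exact hffP N
  obtain ⟨qs, hqs⟩ := Finite.exists_infinite_fiber qf
  have hqs' : (qf ⁻¹' {qs}).Infinite := Set.infinite_coe_iff.mp hqs
  have hqsP : qs ∈ P N0 := by
    obtain ⟨N, hN⟩ := hqs'.nonempty
    exact hN ▸ hqfP N
  -- the run
  set ρ : ℕ → Q := fun i =>
    if i ≤ N0 then iterDown pred i (N0 - i) qs else iterUp succ N0 qs (i - N0) with hρ
  have hρ_le : ∀ i, i ≤ N0 → ρ i = iterDown pred i (N0 - i) qs := by
    intro i hi; simp [hρ, hi]
  have hρ_ge : ∀ i, N0 ≤ i → ρ i = iterUp succ N0 qs (i - N0) := by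
    intro i hi
    rcases Nat.lt_or_ge N0 i with h | h
    · simp [hρ, Nat.not_le.mpr h]
    · have : i = N0 := le_antisymm h hi
      subst this
      simp [hρ, iterDown, iterUp]
  have hmem : ∀ i, ρ i ∈ P i := by
    intro i
    rcases le_or_gt i N0 with hi | hi
    · rw [hρ_le i hi]
      apply hdownP
      rw [Nat.add_sub_cancel' hi]
      exact hqsP
    · rw [hρ_ge i hi.le]
      have := hupP qs hqsP (i - N0)
      rwa [Nat.add_sub_cancel' hi.le] at this
  refine ⟨ρ, hmem 0, hmem, ?_, ?_⟩
  · intro i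
    rcases le_or_gt (i + 1) N0 with hi | hi
    · have hi' : i ≤ N0 := le_trans (Nat.le_succ i) hi
      have h1 : ρ (i + 1) = iterDown pred (i + 1) (N0 - (i + 1)) qs := hρ_le _ hi
      have h2 : ρ i = pred i (ρ (i + 1)) := by
        rw [hρ_le i hi', h1]
        have : N0 - i = (N0 - (i + 1)) + 1 := by omega
        rw [this, iterDown_peel]
      rw [h2]
      exact hpredΔ i _ (hmem (i + 1))
    · have hi' : N0 ≤ i := by omega
      have h1 : ρ (i + 1) = succ i (ρ i) := by
        rw [hρ_ge (i + 1) (by omega), hρ_ge i hi']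
        have : i + 1 - N0 = (i - N0) + 1 := by omega
        rw [this]
        show succ (N0 + (i - N0)) _ = _
        rw [Nat.add_sub_cancel' hi']
      rw [h1]
      exact hsuccΔ i hi' _ (hmem i)
  · intro N
    obtain ⟨N', hN'mem, hN'gt⟩ := hqs'.exists_gt N
    refine ⟨idx N', le_trans hN'gt.le (hidxN N'), ?_⟩
    have hq : qf N' = qs := hN'mem
    rw [hρ_ge (idx N') (hidxN0 N'), ← hq, hqfOrbit N']
    exact hffF N'
end

section
/- Let A be an NBA and A ⊆ Q the union of its accepting SCCs (SCCs in which every cycle contains an accepting state). For an infinite word w, define the breakpoint sequence of pairs (T_i, B_i): T_0 is a set of states in A reached at some position, and T_{i+1} = Δ(T_i, w_i) ∩ A if that set is nonempty; when Δ(T_i, w_i) ∩ A = ∅, set T_{i+1} = B_i (the background set of all other reached states in A) — then: there exists a run of A that eventually stays inside an accepting SCC forever if and only if the breakpoint (emptiness of the track set) occurs only finitely often along an appropriate tracking, provided every reached state in A eventually enters the track set. -/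
namespace NBA

variable {Q A : Type}

lemma mem_ΔSet' {M : NBA Q A} {P : Set Q} {a : A} {q : Q} :
    q ∈ M.ΔSet P a ↔ ∃ p ∈ P, q ∈ M.Δ p a := by
  simp [ΔSet]

lemma ΔSet_mono' {M : NBA Q A} {P P' : Set Q} (h : P ⊆ P') (a : A) :
    M.ΔSet P a ⊆ M.ΔSet P' a := by
  intro q hq
  rw [mem_ΔSet'] at *
  obtain ⟨p, hp, h2⟩ := hq
  exact ⟨p, h hp, h2⟩

lemma scc_eq' {M : NBA Q A} {p q : Q} (h : q ∈ M.scc p) : M.scc p = M.scc q := by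
  simp only [scc, Set.mem_setOf_eq] at h
  rcases h with h | ⟨hpq, hqp⟩
  · subst h; rfl
  · ext r
    simp only [scc, Set.mem_setOf_eq]
    constructor
    · rintro (rfl | ⟨h1, h2⟩)
      · exact Or.inr ⟨hqp, hpq⟩
      · exact Or.inr ⟨hqp.trans h1, h2.trans hpq⟩
    · rintro (rfl | ⟨h1, h2⟩)
      · exact Or.inr ⟨hpq, hqp⟩
      · exact Or.inr ⟨hpq.trans h1, h2.trans hqp⟩

/-- Survival sets: `surv M w T n i` is the set of states in `T i` from which a
forward chain of length `n` staying in the `T` sets exists. -/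
def surv (M : NBA Q A) (w : ℕ → A) (T : ℕ → Set Q) : ℕ → ℕ → Set Q
  | 0, i => T i
  | n+1, i => {q | q ∈ T i ∧ ∃ q', q' ∈ M.Δ q (w i) ∧ q' ∈ surv M w T n (i+1)}

lemma surv_subset_T (M : NBA Q A) (w : ℕ → A) (T : ℕ → Set Q) (n i : ℕ) :
    surv M w T n i ⊆ T i := by
  cases n with
  | zero => exact subset_rfl
  | succ n => exact fun q hq => hq.1

lemma surv_succ_subset (M : NBA Q A) (w : ℕ → A) (T : ℕ → Set Q) :
    ∀ n i, surv M w T (n+1) i ⊆ surv M w T n i := by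
  intro n
  induction n with
  | zero => intro i q hq; exact hq.1
  | succ n ih =>
    intro i q hq
    obtain ⟨h1, q', h2, h3⟩ := hq
    exact ⟨h1, q', h2, ih (i+1) h3⟩

lemma surv_anti (M : NBA Q A) (w : ℕ → A) (T : ℕ → Set Q) :
    ∀ {n m : ℕ}, n ≤ m → ∀ i, surv M w T m i ⊆ surv M w T n i := by
  intro n m h
  induction h with
  | refl => exact fun i => subset_rfl
  | @step m h ih => exact fun i => (surv_succ_subset M w T m i).trans (ih i)

/-- Pigeonhole: an antitone sequence of nonempty subsets of a finite type has
nonempty intersection. -/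
lemma pigeon {Q : Type} [Finite Q] (f : ℕ → Set Q)
    (hanti : ∀ {n m : ℕ}, n ≤ m → f m ⊆ f n)
    (hne : ∀ n, (f n).Nonempty) : ∃ q, ∀ n, q ∈ f n := by
  choose g hg using hne
  obtain ⟨q, hq⟩ := Finite.exists_infinite_fiber g
  have hq' : (g ⁻¹' {q}).Infinite := Set.infinite_coe_iff.mp hq
  refine ⟨q, fun n => ?_⟩
  obtain ⟨m, hm, hmn⟩ := hq'.exists_gt n
  have : g m = q := hm
  exact hanti hmn.le (this ▸ hg m)

/-- Build an infinite run through a step-extendable invariant. -/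
noncomputable def buildRunAux {Q : Type} (P : ℕ → Q → Prop) (R : ℕ → Q → Q → Prop)
    (q0 : Q) (h0 : P 0 q0)
    (hstep : ∀ i q, P i q → ∃ q', R i q q' ∧ P (i+1) q') : (n : ℕ) → {q : Q // P n q}
  | 0 => ⟨q0, h0⟩
  | n+1 =>
    ⟨Classical.choose (hstep n (buildRunAux P R q0 h0 hstep n).1 (buildRunAux P R q0 h0 hstep n).2),
     (Classical.choose_spec (hstep n (buildRunAux P R q0 h0 hstep n).1 (buildRunAux P R q0 h0 hstep n).2)).2⟩

lemma buildRunAux_step {Q : Type} (P : ℕ → Q → Prop) (R : ℕ → Q → Q → Prop)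
    (q0 : Q) (h0 : P 0 q0)
    (hstep : ∀ i q, P i q → ∃ q', R i q q' ∧ P (i+1) q') (n : ℕ) :
    R n (buildRunAux P R q0 h0 hstep n).1 (buildRunAux P R q0 h0 hstep (n+1)).1 :=
  (Classical.choose_spec (hstep n (buildRunAux P R q0 h0 hstep n).1
    (buildRunAux P R q0 h0 hstep n).2)).1

/-- Any state in the subset-construction set `S i` is reachable from `Q0` by a
finite run along `w`. -/
lemma S_prefix (M : NBA Q A) (w : ℕ → A) (S : ℕ → Set Q)
    (hS0 : S 0 = M.Q0) (hSrec : ∀ i, S (i+1) = M.ΔSet (S i) (w i)) :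
    ∀ i q, q ∈ S i →
      ∃ g : ℕ → Q, g i = q ∧ g 0 ∈ M.Q0 ∧ ∀ j < i, g (j+1) ∈ M.Δ (g j) (w j) := by
  intro i
  induction i with
  | zero =>
    intro q hq
    exact ⟨fun _ => q, rfl, hS0 ▸ hq, fun j hj => absurd hj (Nat.not_lt_zero j)⟩
  | succ i ih =>
    intro q hq
    rw [hSrec, mem_ΔSet'] at hq
    obtain ⟨p, hp, hpq⟩ := hq
    obtain ⟨g, hgi, hg0, hgstep⟩ := ih p hp
    refine ⟨fun j => if j ≤ i then g j else q, by simp, by simpa using hg0, ?_⟩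
    intro j hj
    rcases Nat.lt_succ_iff_lt_or_eq.mp hj with hj' | rfl
    · simp only [if_pos hj'.le, if_pos (Nat.succ_le_of_lt hj')]
      exact hgstep j hj'
    · simp only [if_pos le_rfl, if_neg (by omega : ¬ j + 1 ≤ j)]
      rw [hgi]
      exact hpq

end NBA

/-- correctness of the breakpoint (Miyano-Hayashi) tracking for
accepting SCCs: a run staying in an accepting SCC exists iff breakpoints occur
only finitely often, given the fairness proviso. -/
theorem stmt9 {Q A : Type} [Finite Q] (M : NBA Q A) (w : ℕ → A)
    (S T : ℕ → Set Q)
    (hS0 : S 0 = M.Q0)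
    (hSrec : ∀ i, S (i + 1) = M.ΔSet (S i) (w i))
    (hT0 : T 0 = S 0 ∩ M.accUnion)
    (hT1 : ∀ i, (M.ΔSet (T i) (w i) ∩ M.accUnion).Nonempty →
      T (i + 1) = M.ΔSet (T i) (w i) ∩ M.accUnion)
    (hT2 : ∀ i, M.ΔSet (T i) (w i) ∩ M.accUnion = ∅ →
      T (i + 1) = M.ΔSet ((S i ∩ M.accUnion) \ T i) (w i) ∩ M.accUnion)
    (hfair : ∀ (i : ℕ) (ρ : ℕ → Q), ρ i ∈ S i ∩ M.accUnion →
      (∀ j ≥ i, ρ (j + 1) ∈ M.Δ (ρ j) (w j) ∧ ρ (j + 1) ∈ M.accUnion) →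
      ∃ j ≥ i, ρ j ∈ T j) :
    (∃ ρ, M.IsRun ρ w ∧ ∃ C N, M.AcceptingSCC C ∧ ∀ i ≥ N, ρ i ∈ C) ↔
      {i : ℕ | M.ΔSet (T i) (w i) ∩ M.accUnion = ∅}.Finite := by
  constructor
  · rintro ⟨ρ, ⟨hρ0, hρstep⟩, C, N, hC, hρC⟩
    have hρS : ∀ i, ρ i ∈ S i := by
      intro i
      induction i with
      | zero => rw [hS0]; exact hρ0
      | succ i ih => rw [hSrec]; exact NBA.mem_ΔSet'.mpr ⟨ρ i, ih, hρstep i⟩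
    have hacc : ∀ i, N ≤ i → ρ i ∈ M.accUnion := fun i hi => ⟨C, hC, hρC i hi⟩
    obtain ⟨j, hjN, hjT⟩ := hfair N ρ ⟨hρS N, hacc N le_rfl⟩
      (fun k hk => ⟨hρstep k, hacc (k+1) (le_trans hk (Nat.le_succ k))⟩)
    have hT : ∀ k, j ≤ k → ρ k ∈ T k := by
      intro k hk
      induction k, hk using Nat.le_induction with
      | base => exact hjT
      | succ k hk ih =>
        have hmem : ρ (k+1) ∈ M.ΔSet (T k) (w k) ∩ M.accUnion :=
          ⟨NBA.mem_ΔSet'.mpr ⟨ρ k, ih, hρstep k⟩, hacc (k+1) (by omega)⟩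
        rw [hT1 k ⟨_, hmem⟩]
        exact hmem
    apply (Set.finite_Iio j).subset
    intro i hi
    simp only [Set.mem_setOf_eq] at hi
    by_contra h
    have hji : j ≤ i := le_of_not_gt h
    have hmem : ρ (i+1) ∈ M.ΔSet (T i) (w i) ∩ M.accUnion :=
      ⟨NBA.mem_ΔSet'.mpr ⟨ρ i, hT i hji, hρstep i⟩, hacc (i+1) (by omega)⟩
    rw [hi] at hmem
    exact hmem
  · intro hfin
    obtain ⟨N, hN⟩ := hfin.bddAbove
    have hne : ∀ i, N + 1 ≤ i → (M.ΔSet (T i) (w i) ∩ M.accUnion).Nonempty := by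
      intro i hi
      rw [Set.nonempty_iff_ne_empty]
      intro h
      exact absurd (hN h) (by omega)
    set M0 : ℕ := N + 2 with hM0def
    have hTeq : ∀ i, N + 1 ≤ i → T (i+1) = M.ΔSet (T i) (w i) ∩ M.accUnion :=
      fun i hi => hT1 i (hne i hi)
    have hTne : ∀ i, M0 ≤ i → (T i).Nonempty := by
      intro i hi
      obtain ⟨k, rfl⟩ : ∃ k, i = k + 1 := ⟨i - 1, by omega⟩
      rw [hTeq k (by omega)]
      exact hne k (by omega)
    -- survival sets are nonempty
    have hsurvne : ∀ n i, M0 ≤ i → (NBA.surv M w T n i).Nonempty := by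
      intro n
      induction n with
      | zero => exact fun i hi => hTne i hi
      | succ n ih =>
        intro i hi
        obtain ⟨p, hp⟩ := ih (i+1) (by omega)
        have hpT : p ∈ T (i+1) := NBA.surv_subset_T M w T n (i+1) hp
        rw [hTeq i (by omega)] at hpT
        obtain ⟨p0, hp0, hΔ⟩ := NBA.mem_ΔSet'.mp hpT.1
        exact ⟨p0, hp0, p, hΔ, hp⟩
    -- core element at M0
    obtain ⟨q0, hq0⟩ := NBA.pigeon (fun n => NBA.surv M w T n M0)
      (fun h => NBA.surv_anti M w T h M0) (fun n => hsurvne n M0 le_rfl)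
    -- extendability of core states
    have key : ∀ i q, (∀ n, q ∈ NBA.surv M w T n i) →
        ∃ q', q' ∈ M.Δ q (w i) ∧ ∀ n, q' ∈ NBA.surv M w T n (i+1) := by
      intro i q hq
      obtain ⟨q', hq'⟩ := NBA.pigeon (fun n => M.Δ q (w i) ∩ NBA.surv M w T n (i+1))
        (fun h => Set.inter_subset_inter_right _ (NBA.surv_anti M w T h (i+1)))
        (fun n => by
          obtain ⟨_, q', h1, h2⟩ := hq (n+1)
          exact ⟨q', h1, h2⟩)
      exact ⟨q', (hq' 0).1, fun n => (hq' n).2⟩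
    -- build the tail of the run
    set P : ℕ → Q → Prop := fun k q => ∀ n, q ∈ NBA.surv M w T n (M0 + k) with hPdef
    set R : ℕ → Q → Q → Prop := fun k q q' => q' ∈ M.Δ q (w (M0 + k)) with hRdef
    have hstep : ∀ k q, P k q → ∃ q', R k q q' ∧ P (k+1) q' := by
      intro k q hq
      obtain ⟨q', h1, h2⟩ := key (M0 + k) q hq
      exact ⟨q', h1, h2⟩
    set ρt : ℕ → Q := fun k => (NBA.buildRunAux P R q0 hq0 hstep k).1 with hρtdef
    have hρtP : ∀ k, P k (ρt k) := fun k => (NBA.buildRunAux P R q0 hq0 hstep k).2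
    have hρtstep : ∀ k, ρt (k+1) ∈ M.Δ (ρt k) (w (M0 + k)) :=
      fun k => NBA.buildRunAux_step P R q0 hq0 hstep k
    have hρtT : ∀ k, ρt k ∈ T (M0 + k) := fun k => hρtP k 0
    -- T is contained in S and in accUnion
    have hTS : ∀ i, T i ⊆ S i := by
      intro i
      induction i with
      | zero => rw [hT0]; exact Set.inter_subset_left
      | succ i ih =>
        by_cases h : (M.ΔSet (T i) (w i) ∩ M.accUnion).Nonempty
        · rw [hT1 i h, hSrec]
          exact Set.inter_subset_left.trans (NBA.ΔSet_mono' ih _)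
        · rw [hT2 i (Set.not_nonempty_iff_eq_empty.mp h), hSrec]
          exact Set.inter_subset_left.trans
            (NBA.ΔSet_mono' (Set.diff_subset.trans Set.inter_subset_left) _)
    have hTacc : ∀ i, T i ⊆ M.accUnion := by
      intro i
      cases i with
      | zero => rw [hT0]; exact Set.inter_subset_right
      | succ i =>
        by_cases h : (M.ΔSet (T i) (w i) ∩ M.accUnion).Nonempty
        · rw [hT1 i h]; exact Set.inter_subset_right
        · rw [hT2 i (Set.not_nonempty_iff_eq_empty.mp h)]; exact Set.inter_subset_right
    -- finite prefix from Q0 to ρt 0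
    have hρt0S : ρt 0 ∈ S M0 := hTS M0 (by simpa using hρtT 0)
    obtain ⟨g, hgM0, hg0, hgstep⟩ := NBA.S_prefix M w S hS0 hSrec M0 (ρt 0) hρt0S
    -- the full run
    set ρ : ℕ → Q := fun k => if k < M0 then g k else ρt (k - M0) with hρdef
    have hρlt : ∀ k, k < M0 → ρ k = g k := fun k hk => if_pos hk
    have hρge : ∀ k, M0 ≤ k → ρ k = ρt (k - M0) := fun k hk => if_neg (by omega)
    have hρstep : ∀ k, ρ (k+1) ∈ M.Δ (ρ k) (w k) := by
      intro k
      rcases lt_trichotomy (k+1) M0 with h | h | h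
      · rw [hρlt (k+1) h, hρlt k (by omega)]
        exact hgstep k (by omega)
      · rw [hρge (k+1) h.ge, hρlt k (by omega)]
        have : (k+1) - M0 = 0 := by omega
        rw [this]
        have := hgstep k (by omega)
        rwa [show k + 1 = M0 from h, hgM0] at this
      · have hk : M0 ≤ k := by omega
        rw [hρge (k+1) (by omega), hρge k hk]
        have h1 : (k+1) - M0 = (k - M0) + 1 := by omega
        have h2 : M0 + (k - M0) = k := by omega
        rw [h1]
        have := hρtstep (k - M0)
        rwa [h2] at this
    have hρT : ∀ k, M0 ≤ k → ρ k ∈ T k := by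
      intro k hk
      rw [hρge k hk]
      have := hρtT (k - M0)
      rwa [show M0 + (k - M0) = k by omega] at this
    have hρQ0 : ρ 0 ∈ M.Q0 := by
      rw [hρlt 0 (by omega)]; exact hg0
    -- reachability along the run
    have hreach : ∀ a b, a < b → M.reach (ρ a) (ρ b) := by
      intro a b hab
      induction b, hab using Nat.le_induction with
      | base => exact Relation.TransGen.single ⟨w a, hρstep a⟩
      | succ b hb ih => exact Relation.TransGen.tail ih ⟨w b, hρstep b⟩
    -- pigeonhole: some state occurs infinitely often in the tail
    obtain ⟨q, hq0'⟩ := Finite.exists_infinite_fiber (fun k => ρ (M0 + k))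
    have hq : ((fun k => ρ (M0 + k)) ⁻¹' {q}).Infinite := Set.infinite_coe_iff.mp hq0'
    obtain ⟨m0, hm0⟩ := hq.nonempty
    set i0 : ℕ := M0 + m0 with hi0def
    have hρi0 : ρ i0 = q := hm0
    have hscc : ∀ k, i0 ≤ k → ρ k ∈ M.scc q := by
      intro k hk
      obtain ⟨m, hm, hmgt⟩ := hq.exists_gt (k - M0)
      have hρm : ρ (M0 + m) = q := hm
      have hkm : k < M0 + m := by omega
      simp only [NBA.scc, Set.mem_setOf_eq]
      rcases eq_or_lt_of_le hk with rfl | hlt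
      · exact Or.inl hρi0.symm
      · exact Or.inr ⟨hρi0 ▸ hreach i0 k hlt, hρm ▸ hreach k (M0 + m) hkm⟩
    have hqacc : q ∈ M.accUnion := hρi0 ▸ hTacc i0 (hρT i0 (by omega))
    obtain ⟨C, hC, hqC⟩ := hqacc
    obtain ⟨p, rfl⟩ := hC.1
    have hCeq : M.scc p = M.scc q := NBA.scc_eq' hqC
    exact ⟨ρ, ⟨hρQ0, hρstep⟩, M.scc q, i0, hCeq ▸ hC, hscc⟩
end

section
/- The map sending a ranked slice (α, t) with t = (S_1, ..., S_n) to the sequence (U_{α^{-1}(1)}, U_{α^{-1}(2)}, ..., U_{α^{-1}(n)}), where U_i is the union of all sets S_j in the subtree of node i of the rank-tree, is injective: the ranked slice can be uniquely reconstructed from this sequence of sets. -/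
section Tree
variable {n : ℕ} (α : Fin n ≃ Fin n)

lemma parentRel_lt {a p : Fin n} (h : parentRel n α a p) : a < p := h.1.1
lemma parentRel_rank {a p : Fin n} (h : parentRel n α a p) : α p < α a := h.1.2

lemma parentRel_between {a p k : Fin n} (h : parentRel n α a p) (h1 : a < k) (h2 : k < p) :
    α a < α k := by
  rcases lt_or_ge (α k) (α a) with hk | hk
  · exact absurd (h.2 ⟨h1, hk⟩) (not_le.2 h2)
  · exact lt_of_le_of_ne hk fun e => (ne_of_lt h1) (α.injective e.symm).symm

lemma parentRel_unique {a p q : Fin n} (h1 : parentRel n α a p) (h2 : parentRel n α a q) :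
    p = q := le_antisymm (h1.2 h2.1) (h2.2 h1.1)

lemma descend_le {j i : Fin n} (h : descend n α j i) : j ≤ i := by
  induction h with
  | refl => exact le_rfl
  | tail _ hpc ih => exact le_trans ih (le_of_lt (parentRel_lt α hpc))

lemma descend_antisymm {a b : Fin n} (h1 : descend n α a b) (h2 : descend n α b a) : a = b :=
  le_antisymm (descend_le α h1) (descend_le α h2)

lemma descend_min {j i : Fin n} (h : descend n α j i) :
    j ≤ i ∧ ∀ k, j ≤ k → k ≤ i → α i ≤ α k := by
  induction h with
  | refl => exact ⟨le_rfl, fun k h1 h2 => le_of_eq (congrArg α (le_antisymm h2 h1)).symm⟩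
  | @tail c i _ hpc ih =>
    have hci : c < i := parentRel_lt α hpc
    refine ⟨le_trans ih.1 (le_of_lt hci), fun k h1 h2 => ?_⟩
    rcases le_or_gt k c with hkc | hck
    · exact le_trans (le_of_lt (parentRel_rank α hpc)) (ih.2 k h1 hkc)
    · rcases eq_or_lt_of_le h2 with rfl | hki
      · exact le_rfl
      · exact le_of_lt (lt_trans (parentRel_rank α hpc)
          (parentRel_between α hpc hck hki))

lemma exists_parent {i k0 : Fin n} (h0 : i < k0) (h1 : α k0 < α i) :
    ∃ p, parentRel n α i p ∧ p ≤ k0 := by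
  classical
  set F : Finset (Fin n) := Finset.univ.filter (fun k => i < k ∧ α k < α i) with hF
  have hk0 : k0 ∈ F := by simp [hF, h0, h1]
  have hFne : F.Nonempty := ⟨k0, hk0⟩
  refine ⟨F.min' hFne, ⟨?_, ?_⟩, F.min'_le k0 hk0⟩
  · have := F.min'_mem hFne
    simpa [hF] using this
  · intro k hk
    exact F.min'_le k (by simp [hF, hk.1, hk.2])

lemma descend_of_min {j i : Fin n} (hle : j ≤ i) (hmin : ∀ k, j ≤ k → k ≤ i → α i ≤ α k) :
    descend n α j i := by
  obtain ⟨m, hd⟩ : ∃ m, i.val - j.val = m := ⟨_, rfl⟩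
  induction m using Nat.strong_induction_on generalizing j with
  | _ m IH =>
    rcases eq_or_lt_of_le hle with rfl | hlt
    · exact Relation.ReflTransGen.refl
    · have hji : α i < α j := by
        refine lt_of_le_of_ne (hmin j le_rfl hle) fun e => (ne_of_lt hlt) (α.injective e).symm
      obtain ⟨p, hpar, hpk⟩ := exists_parent α hlt hji
      have hjp : j < p := parentRel_lt α hpar
      have hdpi : descend n α p i := by
        refine IH (i.val - p.val) ?_ hpk
          (fun k h1 h2 => hmin k (le_trans (le_of_lt hjp) h1) h2) rfl
        exact hd ▸ Nat.sub_lt_sub_left (Fin.lt_iff_val_lt_val.1 hlt)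
          (Fin.lt_iff_val_lt_val.1 hjp)
      exact Relation.ReflTransGen.head hpar hdpi

lemma descend_iff {j i : Fin n} :
    descend n α j i ↔ j ≤ i ∧ ∀ k, j ≤ k → k ≤ i → α i ≤ α k :=
  ⟨descend_min α, fun h => descend_of_min α h.1 h.2⟩

lemma descend_of_between {j i k : Fin n} (h : descend n α j i) (h1 : j ≤ k) (h2 : k ≤ i) :
    descend n α k i := by
  rw [descend_iff] at h ⊢
  exact ⟨h2, fun t ht1 ht2 => h.2 t (le_trans h1 ht1) ht2⟩

end Tree

section Tree2
variable {n : ℕ} (α : Fin n ≃ Fin n)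

lemma anc_total {t a b : Fin n} (ha : descend n α t a) (hb : descend n α t b) :
    descend n α a b ∨ descend n α b a :=
  Relation.ReflTransGen.total_of_right_unique
    (fun {_ _ _} h1 h2 => parentRel_unique α h1 h2) ha hb

/-- incomparable nodes have disjoint subtrees -/
lemma disjoint_subtrees {a b : Fin n} (hab : ¬ descend n α a b) (hba : ¬ descend n α b a)
    {t : Fin n} (ta : descend n α t a) (tb : descend n α t b) : False := by
  rcases anc_total α ta tb with h | h
  · exact hab h
  · exact hba h

lemma root_forall {r : Fin n} (hr : ∀ k, ¬ parentRel n α r k) {k : Fin n} (hk : r < k) :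
    α r < α k := by
  by_contra h
  push_neg at h
  have : α k < α r := lt_of_le_of_ne h (fun e => (ne_of_lt hk) (α.injective e.symm))
  obtain ⟨p, hp, _⟩ := exists_parent α hk this
  exact hr p hp

lemma exists_root (i : Fin n) : ∃ r, descend n α i r ∧ ∀ k, ¬ parentRel n α r k := by
  obtain ⟨m, hd⟩ : ∃ m, n - i.val = m := ⟨_, rfl⟩
  induction m using Nat.strong_induction_on generalizing i with
  | _ m IH =>
    by_cases h : ∀ k, ¬ parentRel n α i k
    · exact ⟨i, Relation.ReflTransGen.refl, h⟩
    · push_neg at h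
      obtain ⟨p, hp⟩ := h
      have hip : i < p := parentRel_lt α hp
      obtain ⟨r, hr1, hr2⟩ := IH (n - p.val)
        (hd ▸ Nat.sub_lt_sub_left i.isLt (Fin.lt_iff_val_lt_val.1 hip)) p rfl
      exact ⟨r, Relation.ReflTransGen.head hp hr1, hr2⟩

/-- distinct siblings are incomparable -/
lemma sib_not_descend {a b p : Fin n} (ha : parentRel n α a p) (hb : parentRel n α b p)
    (hab : a ≠ b) : ¬ descend n α a b := by
  intro h
  rcases Relation.ReflTransGen.cases_head h with rfl | ⟨x, hx, hxb⟩
  · exact hab rfl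
  · cases parentRel_unique α hx ha
    exact absurd (descend_le α hxb) (not_le.2 (parentRel_lt α hb))

/-- distinct roots are incomparable -/
lemma root_not_descend {a b : Fin n} (ha : ∀ k, ¬ parentRel n α a k) (hab : a ≠ b) :
    ¬ descend n α a b := by
  intro h
  rcases Relation.ReflTransGen.cases_head h with rfl | ⟨x, hx, _⟩
  · exact hab rfl
  · exact ha x hx

/-- subtree order: disjoint subtrees with a < b put all of a's subtree before b's -/
lemma lt_of_disjoint {a b i j : Fin n} (hab : a < b)
    (hdisj : ∀ t, descend n α t a → descend n α t b → False)
    (hi : descend n α i a) (hj : descend n α j b) : i < j := by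
  by_contra h
  push_neg at h
  have hib : descend n α i b :=
    descend_of_between α hj h (le_trans (descend_le α hi) (le_of_lt hab))
  exact hdisj i hi hib

/-- characterization of parent via descend -/
lemma parent_iff {a p : Fin n} :
    parentRel n α a p ↔
      (descend n α a p ∧ a ≠ p ∧ ∀ c, descend n α a c → a ≠ c → descend n α p c) := by
  constructor
  · intro h
    refine ⟨Relation.ReflTransGen.single h, ne_of_lt (parentRel_lt α h), fun c hc hac => ?_⟩
    rcases Relation.ReflTransGen.cases_head hc with rfl | ⟨x, hx, hxc⟩
    · exact absurd rfl hac
    · cases parentRel_unique α hx h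
      exact hxc
  · rintro ⟨h1, h2, h3⟩
    rcases Relation.ReflTransGen.cases_head h1 with rfl | ⟨x, hx, hxp⟩
    · exact absurd rfl h2
    · have hpx : descend n α p x :=
        h3 x (Relation.ReflTransGen.single hx) (ne_of_lt (parentRel_lt α hx))
      cases descend_antisymm α hxp hpx
      exact hx

end Tree2

def strAnc {n : ℕ} (d : Fin n → Fin n → Prop) (a c : Fin n) : Prop := d a c ∧ a ≠ c
def isPar {n : ℕ} (d : Fin n → Fin n → Prop) (a p : Fin n) : Prop :=
  strAnc d a p ∧ ∀ c, strAnc d a c → d p c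
def sibR {n : ℕ} (d : Fin n → Fin n → Prop) (a b : Fin n) : Prop :=
  (∃ p, isPar d a p ∧ isPar d b p) ∨ ((∀ c, ¬ strAnc d a c) ∧ (∀ c, ¬ strAnc d b c))
def crit {n : ℕ} (d : Fin n → Fin n → Prop) (s r : Fin n) : Prop :=
  d s r ∨ ∃ a b, d s a ∧ d r b ∧ sibR d a b ∧ a < b
def rkDesc {n : ℕ} (α : Fin n ≃ Fin n) (s r : Fin n) : Prop :=
  descend n α (α.symm s) (α.symm r)

section Tree3
variable {n : ℕ} (α : Fin n ≃ Fin n)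

lemma sib_rank_lt {a b p : Fin n} (ha : parentRel n α a p) (hb : parentRel n α b p)
    (hab : a < b) : α a < α b :=
  parentRel_between α ha hab (parentRel_lt α hb)

lemma isPar_rk {s p : Fin n} :
    isPar (rkDesc α) s p ↔ parentRel n α (α.symm s) (α.symm p) := by
  rw [parent_iff]
  constructor
  · rintro ⟨⟨h1, h2⟩, h3⟩
    refine ⟨h1, fun e => h2 (α.symm.injective e), fun c hc hne => ?_⟩
    simpa [rkDesc] using h3 (α c) ⟨by simpa [rkDesc] using hc, fun e => hne (by simpa using congrArg α.symm e)⟩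
  · rintro ⟨h1, h2, h3⟩
    refine ⟨⟨h1, fun e => h2 (congrArg α.symm e)⟩, fun c hc => ?_⟩
    simpa [rkDesc] using h3 (α.symm c) hc.1 (fun e => hc.2 (by simpa using congrArg α e))

lemma isRoot_rk {s : Fin n} :
    (∀ c, ¬ strAnc (rkDesc α) s c) ↔ ∀ k, ¬ parentRel n α (α.symm s) k := by
  constructor
  · intro h k hk
    refine h (α k) ⟨by simpa [rkDesc, descend] using Relation.ReflTransGen.single hk, fun e => ?_⟩
    have : α.symm s = k := by simpa using congrArg α.symm e
    exact (ne_of_lt (parentRel_lt α hk)) this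
  · intro h c hc
    have hne : α.symm s ≠ α.symm c := fun e => hc.2 (α.symm.injective e)
    rcases Relation.ReflTransGen.cases_head hc.1 with e | ⟨x, hx, _⟩
    · exact hne e
    · exact h x hx

lemma crit_iff (s r : Fin n) : crit (rkDesc α) s r ↔ α.symm s ≤ α.symm r := by
  classical
  set i := α.symm s with hi
  set j := α.symm r with hj
  constructor
  · rintro (h | ⟨a', b', h1, h2, hsib, hab'⟩)
    · exact descend_le α h
    · set a := α.symm a'
      set b := α.symm b'
      have h1 : descend n α i a := h1
      have h2 : descend n α j b := h2
      have hab : α a < α b := by simpa [a, b] using hab'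
      have hne : a ≠ b := fun e => (ne_of_lt hab) (congrArg α e)
      rcases hsib with ⟨p', hpa, hpb⟩ | ⟨hra, hrb⟩
      · have hpa := (isPar_rk α).1 hpa
        have hpb := (isPar_rk α).1 hpb
        have hlt : a < b := by
          rcases lt_trichotomy a b with h | h | h
          · exact h
          · exact absurd h hne
          · exact absurd (sib_rank_lt α hpb hpa h) (not_lt.2 (le_of_lt hab))
        exact le_of_lt (lt_of_disjoint α hlt
          (fun t ta tb => disjoint_subtrees α (sib_not_descend α hpa hpb hne)
            (sib_not_descend α hpb hpa (Ne.symm hne)) ta tb) h1 h2)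
      · have hra := (isRoot_rk α).1 hra
        have hrb := (isRoot_rk α).1 hrb
        have hlt : a < b := by
          rcases lt_trichotomy a b with h | h | h
          · exact h
          · exact absurd h hne
          · exact absurd (root_forall α hrb h) (not_lt.2 (le_of_lt hab))
        exact le_of_lt (lt_of_disjoint α hlt
          (fun t ta tb => disjoint_subtrees α (root_not_descend α hra hne)
            (root_not_descend α hrb (Ne.symm hne)) ta tb) h1 h2)
  · intro hij
    by_cases hd : descend n α i j
    · exact Or.inl hd
    · have hij' : i < j := lt_of_le_of_ne hij (fun e => hd (e ▸ Relation.ReflTransGen.refl))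
      have hdji : ¬ descend n α j i := fun h => absurd (descend_le α h) (not_le.2 hij')
      obtain ⟨ri, hri, hrooti⟩ := exists_root α i
      obtain ⟨rj, hrj, hrootj⟩ := exists_root α j
      right
      by_cases hrr : ri = rj
      · -- common ancestor exists; take the minimal one
        subst hrr
        set C : Finset (Fin n) :=
          Finset.univ.filter (fun c => descend n α i c ∧ descend n α j c) with hC
        have hriC : ri ∈ C := by simp [hC, hri, hrj]
        have hCne : C.Nonempty := ⟨ri, hriC⟩
        set c0 := C.min' hCne with hc0
        have hc0mem : descend n α i c0 ∧ descend n α j c0 := by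
          have := C.min'_mem hCne
          simpa [hC] using this
        rcases Relation.ReflTransGen.cases_tail hc0mem.1 with e | ⟨a, ha1, ha2⟩
        · exact absurd (e ▸ hc0mem.2) hdji
        rcases Relation.ReflTransGen.cases_tail hc0mem.2 with e | ⟨b, hb1, hb2⟩
        · exact absurd (e ▸ hc0mem.1) hd
        have hne : a ≠ b := by
          rintro rfl
          have : a ∈ C := by
            simp only [hC, Finset.mem_filter, Finset.mem_univ, true_and]
            exact ⟨ha1, hb1⟩
          exact absurd (C.min'_le a this) (not_le.2 (parentRel_lt α ha2))
        have hlt : a < b := by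
          rcases lt_trichotomy a b with h | h | h
          · exact h
          · exact absurd h hne
          · exact absurd (lt_of_disjoint α h
              (fun t tb ta => disjoint_subtrees α (sib_not_descend α hb2 ha2 (Ne.symm hne))
                (sib_not_descend α ha2 hb2 hne) tb ta) hb1 ha1) (not_lt.2 (le_of_lt hij'))
        refine ⟨α a, α b, ?_, ?_, Or.inl ⟨α c0, ?_, ?_⟩, ?_⟩
        · simpa [rkDesc, descend, hi] using ha1
        · simpa [rkDesc, descend, hj] using hb1
        · rw [isPar_rk]; simpa using ha2
        · rw [isPar_rk]; simpa using hb2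
        · exact sib_rank_lt α ha2 hb2 hlt
      · have hlt : ri < rj := by
          rcases lt_trichotomy ri rj with h | h | h
          · exact h
          · exact absurd h hrr
          · exact absurd (lt_of_disjoint α h
              (fun t tb ta => disjoint_subtrees α (root_not_descend α hrootj (Ne.symm hrr))
                (root_not_descend α hrooti hrr) tb ta) hrj hri) (not_lt.2 (le_of_lt hij'))
        refine ⟨α ri, α rj, ?_, ?_, Or.inr ⟨?_, ?_⟩, ?_⟩
        · simpa [rkDesc, hi] using hri
        · simpa [rkDesc, hj] using hrj
        · rw [isRoot_rk]; simpa using hrooti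
        · rw [isRoot_rk]; simpa using hrootj
        · exact root_forall α hrooti hlt
end Tree3

section Enc
variable {Q : Type} {n : ℕ}

lemma mem_subU {S : Fin n → Set Q} {α : Fin n ≃ Fin n} {i : Fin n} {q : Q} :
    q ∈ subU n S α i ↔ ∃ j, descend n α j i ∧ q ∈ S j := by
  simp [subU, Set.mem_iUnion]

lemma idx_eq_of_mem {S : Fin n → Set Q} (hdisj : ∀ i j, i ≠ j → Disjoint (S i) (S j))
    {q : Q} {i k : Fin n} (hi : q ∈ S i) (hk : q ∈ S k) : i = k := by
  by_contra h
  exact Set.disjoint_left.1 (hdisj i k h) hi hk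

lemma enc_subset_iff {S : Fin n → Set Q} (α : Fin n ≃ Fin n)
    (hdisj : ∀ i j, i ≠ j → Disjoint (S i) (S j)) (hne : ∀ i, (S i).Nonempty)
    (s r : Fin n) : sliceEnc n S α s ⊆ sliceEnc n S α r ↔ rkDesc α s r := by
  constructor
  · intro h
    obtain ⟨q, hq⟩ := hne (α.symm s)
    have hqs : q ∈ sliceEnc n S α s :=
      mem_subU.2 ⟨α.symm s, Relation.ReflTransGen.refl, hq⟩
    obtain ⟨t, ht, hqt⟩ := mem_subU.1 (h hqs)
    show descend n α (α.symm s) (α.symm r)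
    rw [idx_eq_of_mem hdisj hq hqt]
    exact ht
  · intro h q hq
    obtain ⟨t, ht, hqt⟩ := mem_subU.1 hq
    exact mem_subU.2 ⟨t, Relation.ReflTransGen.trans ht h, hqt⟩

lemma sets_sub_of_enc {S S' : Fin n → Set Q} (α : Fin n ≃ Fin n)
    (hdisj : ∀ i j, i ≠ j → Disjoint (S i) (S j))
    (henc : sliceEnc n S α = sliceEnc n S' α) (i : Fin n) : S i ⊆ S' i := by
  intro q hq
  have h1 : q ∈ sliceEnc n S α (α i) := by
    refine mem_subU.2 ⟨i, ?_, hq⟩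
    rw [Equiv.symm_apply_apply]
    exact Relation.ReflTransGen.refl
  obtain ⟨j, hj, hqj⟩ := mem_subU.1 (henc ▸ h1)
  rw [Equiv.symm_apply_apply] at hj
  have h2 : q ∈ sliceEnc n S' α (α j) := by
    refine mem_subU.2 ⟨j, ?_, hqj⟩
    rw [Equiv.symm_apply_apply]
    exact Relation.ReflTransGen.refl
  obtain ⟨k, hk, hqk⟩ := mem_subU.1 (henc ▸ h2)
  rw [Equiv.symm_apply_apply] at hk
  cases idx_eq_of_mem hdisj hq hqk
  cases descend_antisymm α hj hk
  exact hqj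

end Enc


/-- the subtree-union encoding of ranked slices is injective. -/
theorem stmt16 {Q : Type} (n : ℕ) (S S' : Fin n → Set Q) (α α' : Fin n ≃ Fin n)
    (hdisj : ∀ i j, i ≠ j → Disjoint (S i) (S j)) (hne : ∀ i, (S i).Nonempty)
    (hdisj' : ∀ i j, i ≠ j → Disjoint (S' i) (S' j)) (hne' : ∀ i, (S' i).Nonempty)
    (henc : sliceEnc n S α = sliceEnc n S' α') :
    S = S' ∧ α = α' := by
  have hdR : rkDesc α = rkDesc α' := by
    funext s r
    apply propext
    rw [← enc_subset_iff α hdisj hne, ← enc_subset_iff α' hdisj' hne', henc]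
  have hcrit : ∀ s r, α.symm s ≤ α.symm r ↔ α'.symm s ≤ α'.symm r := by
    intro s r
    rw [← crit_iff, ← crit_iff, hdR]
  have hαα : α = α' := by
    set e : Fin n ≃ Fin n := α.trans α'.symm with he
    have hmono : StrictMono e := by
      have hle : ∀ a b, a ≤ b ↔ e a ≤ e b := by
        intro a b
        have := hcrit (α a) (α b)
        simpa [he] using this
      intro a b hab
      exact lt_of_le_of_ne ((hle a b).1 (le_of_lt hab))
        (fun x => (ne_of_lt hab) (e.injective x))
    have hmono' : StrictMono e.symm := by
      intro a b hab
      rcases lt_or_ge (e.symm a) (e.symm b) with h | h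
      · exact h
      · exact absurd (by simpa using hmono.monotone h : b ≤ a) (not_le.2 hab)
    have hwf : WellFoundedLT (Fin n) := inferInstance
    have hid : ∀ a, e a = a := by
      intro a
      have h1 : a ≤ e a := hmono.le_apply
      have h2 : e a ≤ a := by
        have := hmono'.le_apply (x := e a)
        simpa using this
      exact le_antisymm h2 h1
    apply Equiv.ext
    intro a
    have h := hid a
    simp only [he, Equiv.trans_apply] at h
    exact (Equiv.symm_apply_eq α').1 h
  subst hαα
  refine ⟨?_, rfl⟩
  funext i
  exact Set.Subset.antisymm (sets_sub_of_enc α hdisj henc i)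
    (sets_sub_of_enc α hdisj' henc.symm i)
end

section
/- Let A be an NBA and w an infinite word. If there exists a run of A on w that visits accepting states of accepting SCCs infinitely often while remaining in the union A' of accepting SCCs from some point on, then w has an accepting run; conversely, any run that eventually remains inside a single accepting SCC is accepting. -/
/-- a run visiting accepting states of accepting SCCs infinitely
often while staying in their union witnesses acceptance; conversely any run
eventually inside a single accepting SCC is accepting. -/
theorem stmt19 {Q A : Type} [Finite Q] (M : NBA Q A) (w : ℕ → A) :
    ((∃ ρ, M.IsRun ρ w ∧ (∃ N, ∀ i ≥ N, ρ i ∈ M.accUnion) ∧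
        (∀ N, ∃ i ≥ N, ρ i ∈ M.F ∧ ρ i ∈ M.accUnion)) → w ∈ M.Lang) ∧
      ∀ (ρ : ℕ → Q) (C : Set Q) (N : ℕ), M.IsRun ρ w → M.AcceptingSCC C →
        (∀ i ≥ N, ρ i ∈ C) → M.Accepting ρ := by
  constructor
  · rintro ⟨ρ, hrun, -, hinf⟩
    exact ⟨ρ, hrun.1, hrun.2, fun N => (hinf N).imp fun i ⟨h1, h2, _⟩ => ⟨h1, h2⟩⟩
  · rintro ρ C N ⟨-, hrun⟩ ⟨-, -, hcyc⟩ hC N₀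
    set N' := max N N₀ with hN'
    obtain ⟨k, k', hne, heq⟩ := Finite.exists_ne_map_eq_of_infinite (fun k : ℕ => ρ (N' + k))
    wlog hlt : k < k' generalizing k k'
    · exact this k' k hne.symm heq.symm (by omega)
    obtain ⟨m, hm, hF⟩ := hcyc (k' - k) (fun j => ρ (N' + k + j)) (by omega)
      (by show ρ (N' + k + (k' - k)) = ρ (N' + k + 0); rw [show N' + k + (k' - k) = N' + k' from by omega, Nat.add_zero]; exact heq.symm)
      (fun i _ => hC _ (le_trans (le_max_left N N₀) (by omega)))
      (fun i _ => ⟨w (N' + k + i), by have := hrun (N' + k + i); simpa [Nat.add_assoc] using this⟩)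
    exact ⟨N' + k + m, le_trans (le_max_right N N₀) (by omega), hF⟩
end
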